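/- arXiv:2301.12137 — 2 statements merged into one kernel-verified Lean document; each statement's English description precedes it below -/
import Mathlib

section
/- For d odd, the displaced parity operator satisfies P(γ,δ) = (1/d) ∑_{α,β} D(α,β) ω_d(βγ - αδ), and conversely D(α,β) = (1/d) ∑_{γ,δ} P(γ,δ) ω_d(-βγ + αδ). -/
/-!
Entrywise, `D(α,β)` lives on the diagonal `j - k = β` with entries `ω(αj - αβ/2)`, and, since `F²`
is the parity `j ↦ -j`, `P(γ,δ)` lives on the antidiagonal `j + k = 2δ` with entries `ω(γ(j - k))`.
In `∑ ω(βγ - αδ) D(α,β)` the sum over `β` therefore picks out the diagonal through `(j,k)`, and what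
remains is a character sum over `α` that vanishes unless `j - δ - (j - k)/2 = 0`, i.e. unless
`j + k = 2δ`; this is where `2` has to be invertible mod `d`. The converse formula holds because the
symplectic Fourier transform `f ↦ (1/d) ∑ ω(βγ - αδ) f(α,β)` is an involution, by orthogonality of
characters.
-/

open Matrix

/-- `ω m a = exp(2πi a / m)` for `a : ZMod m`. -/
noncomputable def ω (m : ℕ) (a : ZMod m) : ℂ :=
  Complex.exp (2 * (Real.pi : ℂ) * Complex.I * (a.val : ℂ) / (m : ℂ))

/-- The finite Fourier transform matrix `F_{jk} = ω_d(jk)/√d`. -/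
noncomputable def Fmat (d : ℕ) [NeZero d] : Matrix (ZMod d) (ZMod d) ℂ :=
  fun j k => (1 / (Real.sqrt d : ℂ)) * ω d (j * k)


/-- The cyclic shift operator: `X^β |X;j⟩ = |X;j+β⟩`. -/
def Xmat (d : ℕ) [NeZero d] (β : ZMod d) : Matrix (ZMod d) (ZMod d) ℂ :=
  fun j k => if j = k + β then 1 else 0

/-- The diagonal clock operator: `Z^α |X;j⟩ = ω_d(αj)|X;j⟩`. -/
noncomputable def Zmat (d : ℕ) [NeZero d] (α : ZMod d) : Matrix (ZMod d) (ZMod d) ℂ :=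
  Matrix.diagonal (fun j => ω d (α * j))


/-- The displacement operator `D(α,β) = Z^α X^β ω_d(-2⁻¹αβ)`. -/
noncomputable def Dmat (d : ℕ) [NeZero d] (α β : ZMod d) : Matrix (ZMod d) (ZMod d) ℂ :=
  ω d (-((2 : ZMod d)⁻¹ * α * β)) • (Zmat d α * Xmat d β)


/-- The displaced parity operator `P(γ,δ) = D(γ,δ) F² D(γ,δ)†`. -/
noncomputable def Pmat (d : ℕ) [NeZero d] (γ δ : ZMod d) : Matrix (ZMod d) (ZMod d) ℂ :=
  Dmat d γ δ * (Fmat d) ^ 2 * (Dmat d γ δ)ᴴ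

section Character

variable {d : ℕ} [NeZero d]

lemma ω_eq_stdAddChar (a : ZMod d) : ω d a = ZMod.stdAddChar a := by
  rw [ω, ZMod.stdAddChar_apply, ZMod.toCircle_apply]

lemma ω_add (a b : ZMod d) : ω d (a + b) = ω d a * ω d b := by
  simp only [ω_eq_stdAddChar, AddChar.map_add_eq_mul]

lemma star_ω (a : ZMod d) : star (ω d a) = ω d (-a) := by
  simp only [ω_eq_stdAddChar, AddChar.map_neg_eq_conj, RCLike.star_def]

lemma sum_ω_mul (c : ZMod d) : ∑ a : ZMod d, ω d (a * c) = if c = 0 then (d : ℂ) else 0 := by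
  simp only [ω_eq_stdAddChar, AddChar.sum_mulShift c (ZMod.isPrimitive_stdAddChar d), ZMod.card,
    Nat.cast_ite, Nat.cast_zero]

end Character

section Entries

variable {d : ℕ} [NeZero d]

lemma Dmat_apply (α β j k : ZMod d) :
    Dmat d α β j k = if j - k = β then ω d (α * j - 2⁻¹ * α * β) else 0 := by
  have hshift : (j = k + β) ↔ (j - k = β) := by rw [sub_eq_iff_eq_add']
  simp only [Dmat, Zmat, Xmat, Matrix.smul_apply, diagonal_mul, hshift, smul_eq_mul, mul_ite,
    mul_one, mul_zero, sub_eq_add_neg (α * j), ω_add]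
  split_ifs <;> ring

lemma Fmat_sq_apply (j k : ZMod d) : (Fmat d ^ 2) j k = if j + k = 0 then 1 else 0 := by
  have hsqrt : (Real.sqrt d : ℂ) * Real.sqrt d = d := by
    rw [← Complex.ofReal_mul, Real.mul_self_sqrt (Nat.cast_nonneg d), Complex.ofReal_natCast]
  have hd : (d : ℂ) ≠ 0 := Nat.cast_ne_zero.mpr (NeZero.ne d)
  calc (Fmat d ^ 2) j k = (1 / d) * ∑ m : ZMod d, ω d (m * (j + k)) := by
        simp only [sq, mul_apply, Fmat, Finset.mul_sum, ← hsqrt]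
        refine Finset.sum_congr rfl fun m _ => ?_
        rw [mul_add, ω_add]
        ring_nf
    _ = if j + k = 0 then 1 else 0 := by
        rw [sum_ω_mul]
        split_ifs
        · exact one_div_mul_cancel hd
        · exact mul_zero _

lemma Dmat_mul_Fmat_sq_apply (γ δ j n : ZMod d) :
    (Dmat d γ δ * Fmat d ^ 2) j n = if j + n = δ then ω d (γ * j - 2⁻¹ * γ * δ) else 0 := by
  rw [mul_apply, Fintype.sum_eq_single (j - δ)]
  · have hparity : j - δ + n = 0 ↔ j + n = δ := by rw [sub_add_eq_add_sub, sub_eq_zero]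
    simp only [Dmat_apply, Fmat_sq_apply, sub_sub_cancel, if_true, hparity, mul_ite, mul_one,
      mul_zero]
  · intro m hm
    rw [Dmat_apply, if_neg (fun h => hm (by rw [← h, sub_sub_cancel])), zero_mul]

lemma Pmat_apply (γ δ j k : ZMod d) :
    Pmat d γ δ j k = if j + k = 2 * δ then ω d (γ * (j - k)) else 0 := by
  rw [Pmat, mul_apply, Fintype.sum_eq_single (δ - j)]
  · have hdiag : k - (δ - j) = δ ↔ j + k = 2 * δ := by
      constructor <;> intro h <;> linear_combination h
    simp only [Dmat_mul_Fmat_sq_apply, conjTranspose_apply, Dmat_apply, add_sub_cancel, if_true,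
      hdiag]
    split_ifs
    · rw [star_ω, ← ω_add]
      ring_nf
    · rw [star_zero, mul_zero]
  · intro n hn
    rw [Dmat_mul_Fmat_sq_apply, if_neg (fun h => hn (by rw [← h, add_sub_cancel_left])), zero_mul]

end Entries

lemma sum_sum_sum_sum_comm {ι κ M : Type*} [Fintype ι] [Fintype κ] [AddCommMonoid M]
    (g : ι → ι → κ → κ → M) :
    ∑ a, ∑ b, ∑ c, ∑ e, g a b c e = ∑ c, ∑ e, ∑ a, ∑ b, g a b c e := by
  simp only [← Finset.sum_product']
  exact Fintype.sum_equiv ((Equiv.prodAssoc _ _ _).symm.trans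
    ((Equiv.prodComm _ _).trans (Equiv.prodAssoc _ _ _))) _ _ fun _ => rfl

section SymplecticFourier

variable {d : ℕ} [NeZero d] {M : Type*} [AddCommMonoid M] [Module ℂ M]

noncomputable def symplecticFourier (f : ZMod d → ZMod d → M) (γ δ : ZMod d) : M :=
  (1 / (d : ℂ)) • ∑ α : ZMod d, ∑ β : ZMod d, ω d (β * γ - α * δ) • f α β

lemma symplecticFourier_apply (f : ZMod d → ZMod d → M) (γ δ : ZMod d) :
    symplecticFourier f γ δ =
      (1 / (d : ℂ)) • ∑ α : ZMod d, ∑ β : ZMod d, ω d (β * γ - α * δ) • f α β :=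
  rfl

lemma sum_sum_ω_mul_ω (α β α' β' : ZMod d) :
    ∑ γ : ZMod d, ∑ δ : ZMod d, ω d (δ * α - γ * β) * ω d (β' * γ - α' * δ) =
      if α' = α ∧ β' = β then (d : ℂ) * d else 0 := by
  have hphase : ∀ γ δ : ZMod d, ω d (δ * α - γ * β) * ω d (β' * γ - α' * δ) =
      ω d (γ * (β' - β)) * ω d (δ * (α - α')) := by
    intro γ δ
    rw [← ω_add, ← ω_add]
    ring_nf
  simp only [hphase, ← Finset.mul_sum, ← Finset.sum_mul, sum_ω_mul, sub_eq_zero, eq_comm (a := α)]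
  split_ifs <;> simp_all

theorem symplecticFourier_symplecticFourier (f : ZMod d → ZMod d → M) :
    symplecticFourier (symplecticFourier f) = f := by
  have hd : (d : ℂ) ≠ 0 := Nat.cast_ne_zero.mpr (NeZero.ne d)
  have hscale : 1 / (d : ℂ) * (1 / d) * (d * d) = 1 := by field_simp
  funext α β
  calc symplecticFourier (symplecticFourier f) α β
      = ∑ α' : ZMod d, ∑ β' : ZMod d, ((1 / (d : ℂ)) * (1 / d) *
          ∑ γ : ZMod d, ∑ δ : ZMod d, ω d (δ * α - γ * β) * ω d (β' * γ - α' * δ)) • f α' β' := by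
        simp only [symplecticFourier_apply, Finset.smul_sum, smul_smul, Finset.mul_sum,
          Finset.sum_smul]
        rw [sum_sum_sum_sum_comm]
        congr! 5
        ring
    _ = f α β := by
        simp only [sum_sum_ω_mul_ω, mul_ite, mul_zero, ite_smul, zero_smul, ite_and,
          Finset.sum_ite_irrel, Finset.sum_const_zero, Fintype.sum_ite_eq', hscale, one_smul]

end SymplecticFourier

lemma two_mul_inv_two_of_odd {d : ℕ} (hd : Odd d) : (2 : ZMod d) * 2⁻¹ = 1 :=
  ZMod.mul_inv_of_unit _ <| by
    simpa using (ZMod.isUnit_iff_coprime 2 d).mpr (Nat.coprime_two_left.mpr hd)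

theorem Pmat_eq_symplecticFourier_Dmat {d : ℕ} [NeZero d] (hd : Odd d) :
    Pmat d = symplecticFourier (Dmat d) := by
  have htwo := two_mul_inv_two_of_odd hd
  have hd0 : (d : ℂ) ≠ 0 := Nat.cast_ne_zero.mpr (NeZero.ne d)
  funext γ δ
  ext j k
  have hphase : ∀ α : ZMod d, ω d ((j - k) * γ - α * δ) * ω d (α * j - 2⁻¹ * α * (j - k)) =
      ω d (γ * (j - k)) * ω d (α * (j - δ - 2⁻¹ * (j - k))) := by
    intro α
    rw [← ω_add, ← ω_add]
    ring_nf
  have hcentre : j - δ - 2⁻¹ * (j - k) = 0 ↔ j + k = 2 * δ := by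
    constructor <;> intro h
    · linear_combination 2 * h + (j - k) * htwo
    · linear_combination 2⁻¹ * h + (δ - j) * htwo
  simp only [Pmat_apply, symplecticFourier_apply, Matrix.smul_apply, Matrix.sum_apply, smul_eq_mul,
    Dmat_apply, mul_ite, mul_zero, Finset.sum_ite_eq, Finset.mem_univ, if_true, hphase,
    ← Finset.mul_sum, sum_ω_mul, hcentre]
  split_ifs
  · field_simp
  · rfl

/-- The displaced parity operator and displacement operators are Fourier transforms
of each other. -/
theorem stmt7 (d : ℕ) [NeZero d] (hd : Odd d) :
    (∀ γ δ : ZMod d, Pmat d γ δ =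
      (1 / (d : ℂ)) • ∑ α : ZMod d, ∑ β : ZMod d, ω d (β * γ - α * δ) • Dmat d α β) ∧
    (∀ α β : ZMod d, Dmat d α β =
      (1 / (d : ℂ)) • ∑ γ : ZMod d, ∑ δ : ZMod d, ω d (-(β * γ) + α * δ) • Pmat d γ δ) := by
  rw [Pmat_eq_symplecticFourier_Dmat hd]
  refine ⟨symplecticFourier_apply (Dmat d), fun α β => ?_⟩
  have hphase : ∀ γ δ : ZMod d, -(β * γ) + α * δ = δ * α - γ * β := fun γ δ => by ring
  simp only [hphase]
  exact (congr_fun₂ (symplecticFourier_symplecticFourier (Dmat d)) α β).symm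
end

section
/- For d odd and n = 2, the global momentum state |P_G; dλ⟩ equals the local momentum state |P_L; λ, 0⟩ for every λ with -(d-1)/2 ≤ λ ≤ (d-1)/2. -/
open Matrix

/-- The symmetric-interval representative of `x : ZMod d`, lying in `[-(d-1)/2, (d-1)/2]`
for odd `d`. -/
def valMin (d : ℕ) (x : ZMod d) : ℤ :=
  if (x.val : ℤ) ≤ ((d : ℤ) - 1) / 2 then (x.val : ℤ) else (x.val : ℤ) - d

/-- The map `(j₀,...,j_{n-1}) ↦ j₀ + j₁ d + ... + j_{n-1} d^{n-1} (mod dⁿ)`,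
using symmetric representatives. -/
def encMap (d n : ℕ) [NeZero d] (j : Fin n → ZMod d) : ZMod (d ^ n) :=
  ((∑ r : Fin n, valMin d (j r) * (d : ℤ) ^ (r : ℕ) : ℤ) : ZMod (d ^ n))

/-- The local Fourier transform `F_L = F ⊗ ... ⊗ F` on the n-fold tensor basis. -/
noncomputable def FLmat (d n : ℕ) [NeZero d] :
    Matrix (Fin n → ZMod d) (Fin n → ZMod d) ℂ :=
  fun j k => ∏ r : Fin n, Fmat d (j r) (k r)

/-! Multiplying the encoded index `j₀ + j₁ d` by `d λ` kills the `j₁` term modulo `d²`, and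
`ω_{d²}(d z) = ω_d(z)`; so the global phase `ω_{d²}(d λ (j₀ + j₁ d))` is the local phase
`ω_d(λ j₀) · ω_d(0)`, while the normalisations agree because `√(d²) = √d · √d`. -/

lemma ω_zero (m : ℕ) : ω m 0 = 1 := by
  simp [ω]

lemma ω_intCast (m : ℕ) [NeZero m] (z : ℤ) :
    ω m z = Complex.exp (2 * Real.pi * Complex.I * z / m) := by
  have hm : (m : ℂ) ≠ 0 := Nat.cast_ne_zero.mpr (NeZero.ne m)
  have hval : (((z : ZMod m).val : ℤ) : ℂ) = z - m * ((z / m : ℤ) : ℂ) := by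
    rw [ZMod.val_intCast, Int.emod_def]
    push_cast
    ring
  rw [ω, Complex.exp_eq_exp_iff_exists_int]
  refine ⟨-(z / m), ?_⟩
  rw [← Int.cast_natCast, hval]
  field_simp
  push_cast
  ring

lemma ω_intCast_mul_of_eq_mul {k m n : ℕ} [NeZero k] [NeZero m] (hk : k = m * n) (z : ℤ) :
    ω k ((n * z : ℤ) : ZMod k) = ω m z := by
  subst hk
  have hn : (n : ℂ) ≠ 0 := by
    exact_mod_cast right_ne_zero_of_mul (NeZero.ne (m * n))
  rw [ω_intCast, ω_intCast]
  congr 1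
  push_cast
  field_simp

lemma valMin_cast (d : ℕ) [NeZero d] (y : ZMod d) : (valMin d y : ZMod d) = y := by
  unfold valMin
  split_ifs <;> simp

lemma encMap_two (d : ℕ) [NeZero d] (x : Fin 2 → ZMod d) :
    encMap d 2 x = ((valMin d (x 0) + valMin d (x 1) * d : ℤ) : ZMod (d ^ 2)) := by
  simp [encMap, Fin.sum_univ_two]

lemma encMap_two_mul_natCast_mul (d : ℕ) [NeZero d] (x : Fin 2 → ZMod d) (l : ℤ) :
    encMap d 2 x * ((d : ZMod (d ^ 2)) * (l : ZMod (d ^ 2))) =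
      ((d * (valMin d (x 0) * l) : ℤ) : ZMod (d ^ 2)) := by
  have hsq : (d : ZMod (d ^ 2)) ^ 2 = 0 := by
    exact_mod_cast ZMod.natCast_self (d ^ 2)
  rw [encMap_two]
  push_cast
  linear_combination (valMin d (x 1) * l : ZMod (d ^ 2)) * hsq

lemma sqrt_natCast_sq (d : ℕ) : (Real.sqrt (d ^ 2 : ℕ) : ℂ) = Real.sqrt d * Real.sqrt d := by
  rw [Nat.cast_pow, Real.sqrt_sq (Nat.cast_nonneg d), ← Complex.ofReal_mul,
    Real.mul_self_sqrt (Nat.cast_nonneg d)]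

theorem stmt12_general (d : ℕ) [NeZero d] [NeZero (d ^ 2)] :
    ∀ l : ℤ, -(((d : ℤ) - 1) / 2) ≤ l → l ≤ ((d : ℤ) - 1) / 2 →
      ∀ x : Fin 2 → ZMod d,
        (Fmat (d ^ 2)).mulVec
            (Pi.single ((d : ZMod (d ^ 2)) * (l : ZMod (d ^ 2))) 1 : ZMod (d ^ 2) → ℂ)
            (encMap d 2 x) =
          (FLmat d 2).mulVec
            (Pi.single (fun r : Fin 2 => if (r : ℕ) = 0 then (l : ZMod d) else 0) 1 :
              (Fin 2 → ZMod d) → ℂ) x := by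
  intro l _ _ x
  have hphase : ω (d ^ 2) (encMap d 2 x * ((d : ZMod (d ^ 2)) * (l : ZMod (d ^ 2)))) =
      ω d (x 0 * l) := by
    rw [encMap_two_mul_natCast_mul, ω_intCast_mul_of_eq_mul (sq d), Int.cast_mul, valMin_cast]
  simp only [mulVec_single_one, col_apply, FLmat, Fin.prod_univ_two, Fmat, Fin.val_zero,
    Fin.val_one, one_ne_zero, if_true, if_false, mul_zero, ω_zero, hphase, sqrt_natCast_sq]
  ring

/-- For n = 2, `|P_G; dλ⟩ = |P_L; λ, 0⟩` for all λ in `[-(d-1)/2, (d-1)/2]` (d odd). -/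
theorem stmt12 (d : ℕ) [NeZero d] [NeZero (d ^ 2)] (hd : Odd d) :
    ∀ l : ℤ, -(((d : ℤ) - 1) / 2) ≤ l → l ≤ ((d : ℤ) - 1) / 2 →
      ∀ x : Fin 2 → ZMod d,
        (Fmat (d ^ 2)).mulVec
            (Pi.single ((d : ZMod (d ^ 2)) * (l : ZMod (d ^ 2))) 1 : ZMod (d ^ 2) → ℂ)
            (encMap d 2 x) =
          (FLmat d 2).mulVec
            (Pi.single (fun r : Fin 2 => if (r : ℕ) = 0 then (l : ZMod d) else 0) 1 :
              (Fin 2 → ZMod d) → ℂ) x :=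
  stmt12_general d
end
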